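/- arXiv:2409.17041 — 4 statements merged into one kernel-verified Lean document; each statement's English description precedes it below -/
import Mathlib

section
/- Let λ > 0, d > 0, φ₁ < φ₂ be real numbers, and let −π/2 ≤ θ₁ < θ₂ ≤ π/2. Then | (1 / ((φ₂ − φ₁)(sin θ₂ − sin θ₁))) · ∫_{φ₁}^{φ₂} ∫_{θ₁}^{θ₂} exp( i (2π/λ) d sin θ ) cos θ dθ dφ | = | sinc( (2d/λ) · cos((θ₂ + θ₁)/2) · sin((θ₂ − θ₁)/2) ) |. -/
open Real Complex intervalIntegral

/-- The normalized sinc function: `sinc x = sin (π x) / (π x)` for `x ≠ 0` and `sinc 0 = 1`. -/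
noncomputable def nsinc (x : ℝ) : ℝ :=
  if x = 0 then 1 else Real.sin (Real.pi * x) / (Real.pi * x)

/-!
The substitution `s = sin θ` turns the inner integral into `∫ s in sin θ₁..sin θ₂, exp (i a s)`
with `a = 2π d / λ`, whose modulus is `Δ · |sinc (a Δ / 2)|` for `Δ = sin θ₂ - sin θ₁`; the
azimuth integral only contributes the factor `φ₂ - φ₁`. By the sum-to-product formula,
`a Δ / 2 = 2π (d / λ) cos ((θ₂ + θ₁) / 2) sin ((θ₂ - θ₁) / 2)`, which is `π` times the
argument of the normalized sinc.
-/

lemma nsinc_eq_sinc_pi_mul (x : ℝ) : nsinc x = Real.sinc (π * x) := by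
  simp [nsinc, Real.sinc, Real.pi_ne_zero]

lemma Real.mul_sinc (x : ℝ) : x * Real.sinc x = Real.sin x := by
  rcases eq_or_ne x 0 with rfl | hx
  · simp
  · rw [Real.sinc_of_ne_zero hx, mul_div_cancel₀ _ hx]

lemma norm_exp_I_mul_sub_exp_I_mul (x y : ℝ) :
    ‖cexp (I * x) - cexp (I * y)‖ = 2 * |Real.sin ((x - y) / 2)| := by
  have hsplit : cexp (I * x) - cexp (I * y) = cexp (I * y) * (cexp (I * ↑(x - y)) - 1) := by
    rw [mul_sub, ← Complex.exp_add]; push_cast; ring_nf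
  rw [hsplit, norm_mul, Complex.norm_exp_I_mul_ofReal, one_mul,
    Complex.norm_exp_I_mul_ofReal_sub_one, norm_mul, Real.norm_eq_abs, Real.norm_eq_abs, abs_two]

lemma norm_integral_exp_I_mul (a u v : ℝ) :
    ‖∫ s in u..v, cexp (I * ↑(a * s))‖ = |v - u| * |Real.sinc (a * (v - u) / 2)| := by
  rcases eq_or_ne a 0 with rfl | ha
  · simp [-ofReal_sub]
  have hIa : I * a ≠ 0 := mul_ne_zero I_ne_zero (ofReal_ne_zero.2 ha)
  have hint : ∫ s in u..v, cexp (I * ↑(a * s))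
      = (cexp (I * ↑(a * v)) - cexp (I * ↑(a * u))) / (I * a) := by
    simp_rw [ofReal_mul, ← mul_assoc]
    exact integral_exp_mul_complex hIa
  have hsinc : |a| / 2 * (|v - u| * |Real.sinc (a * (v - u) / 2)|)
      = |Real.sin (a * (v - u) / 2)| := by
    rw [← Real.mul_sinc, abs_mul, abs_div, abs_mul, abs_two]; ring
  rw [hint, norm_div, norm_exp_I_mul_sub_exp_I_mul, norm_mul, norm_I, one_mul, norm_real,
    Real.norm_eq_abs, ← mul_sub, ← hsinc]
  field_simp

lemma integral_exp_I_mul_sin_mul_cos (a θ₁ θ₂ : ℝ) :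
    ∫ θ in θ₁..θ₂, cexp (I * ↑(a * Real.sin θ)) * ↑(Real.cos θ)
      = ∫ s in Real.sin θ₁..Real.sin θ₂, cexp (I * ↑(a * s)) := by
  simp_rw [mul_comm (cexp _), ← Complex.real_smul]
  exact integral_deriv_smul_comp (g := fun s : ℝ ↦ cexp (I * ↑(a * s)))
    (fun θ _ ↦ Real.hasDerivAt_sin θ) Real.continuous_cos.continuousOn (by fun_prop)

theorem spatial_correlation_sinc_law_general
    (lam d φ₁ φ₂ θ₁ θ₂ : ℝ) (hφ : φ₁ < φ₂)
    (hθ₁ : -(Real.pi / 2) ≤ θ₁) (hθ : θ₁ < θ₂) (hθ₂ : θ₂ ≤ Real.pi / 2) :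
    ‖((1 / (((φ₂ - φ₁) * (Real.sin θ₂ - Real.sin θ₁) : ℝ) : ℂ)) *
        ∫ φ in φ₁..φ₂, ∫ θ in θ₁..θ₂,
          Complex.exp (Complex.I * ((2 * Real.pi / lam) * d * Real.sin θ : ℝ)) *
            ((Real.cos θ : ℝ) : ℂ))‖
      = |nsinc ((2 * d / lam) * Real.cos ((θ₂ + θ₁) / 2) * Real.sin ((θ₂ - θ₁) / 2))| := by
  set a := 2 * π / lam * d
  have hsin : Real.sin θ₁ < Real.sin θ₂ :=
    Real.strictMonoOn_sin ⟨hθ₁, hθ.le.trans hθ₂⟩ ⟨hθ₁.trans hθ.le, hθ₂⟩ hθ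
  have hphase : π * (2 * d / lam * Real.cos ((θ₂ + θ₁) / 2) * Real.sin ((θ₂ - θ₁) / 2))
      = a * (Real.sin θ₂ - Real.sin θ₁) / 2 := by
    rw [Real.sin_sub_sin]; ring
  rw [integral_exp_I_mul_sin_mul_cos, integral_const, norm_mul, norm_smul,
    norm_integral_exp_I_mul, nsinc_eq_sinc_pi_mul, hphase, norm_div, norm_one, norm_real,
    Real.norm_eq_abs, Real.norm_eq_abs, abs_mul]
  have hφ' : |φ₂ - φ₁| ≠ 0 := abs_ne_zero.2 (sub_pos.2 hφ).ne'
  have hΔ : |Real.sin θ₂ - Real.sin θ₁| ≠ 0 := abs_ne_zero.2 (sub_pos.2 hsin).ne'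
  field_simp

/-- Proposition 2: the magnitude of the normalized spatial correlation under isotropic
scattering over azimuth `[φ₁, φ₂]` and elevation `[θ₁, θ₂]` equals the sinc law. -/
theorem spatial_correlation_sinc_law
    (lam d φ₁ φ₂ θ₁ θ₂ : ℝ) (hlam : 0 < lam) (hd : 0 < d) (hφ : φ₁ < φ₂)
    (hθ₁ : -(Real.pi / 2) ≤ θ₁) (hθ : θ₁ < θ₂) (hθ₂ : θ₂ ≤ Real.pi / 2) :
    ‖((1 / (((φ₂ - φ₁) * (Real.sin θ₂ - Real.sin θ₁) : ℝ) : ℂ)) *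
        ∫ φ in φ₁..φ₂, ∫ θ in θ₁..θ₂,
          Complex.exp (Complex.I * ((2 * Real.pi / lam) * d * Real.sin θ : ℝ)) *
            ((Real.cos θ : ℝ) : ℂ))‖
      = |nsinc ((2 * d / lam) * Real.cos ((θ₂ + θ₁) / 2) * Real.sin ((θ₂ - θ₁) / 2))| :=
  spatial_correlation_sinc_law_general lam d φ₁ φ₂ θ₁ θ₂ hφ hθ₁ hθ hθ₂
end

section
/- Let λ > 0, d > 0, φ₁ < φ₂ be real numbers, let −π/2 ≤ θ₁ < θ₂ ≤ π/2, set b = 2πd/λ, s₁ = sin θ₁, and s₂ = sin θ₂. Then (1 / ((φ₂ − φ₁)(s₂ − s₁))) · ∫_{φ₁}^{φ₂} ∫_{θ₁}^{θ₂} exp( i b sin θ ) cos θ dθ dφ = exp( i b (s₁ + s₂)/2 ) · sin( b (s₂ − s₁)/2 ) / ( b (s₂ − s₁)/2 ). -/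
/-!
Substituting `u = sin θ` turns the inner integral into `∫_{s₁}^{s₂} e^{ibu} du`
`= (e^{ibs₂} - e^{ibs₁}) / (ib)`; factoring out the midpoint phase `e^{ib(s₁+s₂)/2}` leaves
`2i sin(b(s₂-s₁)/2)`, and the outer integral and the normalisation only contribute the constant
`(φ₂ - φ₁)(s₂ - s₁)`.
-/

open Real Complex intervalIntegral

theorem integral_cexp_mul_sin_mul_cos (b θ₁ θ₂ : ℝ) :
    (∫ θ in θ₁..θ₂,
        Complex.exp (Complex.I * (b * Real.sin θ : ℝ)) * ((Real.cos θ : ℝ) : ℂ))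
      = ∫ u in Real.sin θ₁..Real.sin θ₂, Complex.exp (Complex.I * b * u) := by
  rw [← integral_deriv_smul_comp (fun x _ => Real.hasDerivAt_sin x)
    Real.continuous_cos.continuousOn (by fun_prop)]
  refine integral_congr fun θ _ => ?_
  rw [Function.comp_apply, Complex.real_smul, Complex.ofReal_mul, ← mul_assoc, mul_comm]

theorem cexp_mul_I_sub_cexp_mul_I (x y : ℝ) :
    Complex.exp (x * Complex.I) - Complex.exp (y * Complex.I)
      = Complex.exp (Complex.I * ((x + y) / 2 : ℝ)) *
          (2 * Complex.I * (Real.sin ((x - y) / 2) : ℂ)) := by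
  have hx : (x : ℂ) * Complex.I
      = Complex.I * ((x + y) / 2 : ℝ) + ((x - y) / 2 : ℝ) * Complex.I := by push_cast; ring
  have hy : (y : ℂ) * Complex.I
      = Complex.I * ((x + y) / 2 : ℝ) + (-((x - y) / 2 : ℝ) : ℂ) * Complex.I := by
    push_cast; ring
  rw [hx, hy, Complex.exp_add, Complex.exp_add, Complex.exp_mul_I, Complex.exp_mul_I,
    Complex.cos_neg, Complex.sin_neg, ← Complex.ofReal_sin]
  ring

/-- For `s₁ = s₂` both sides vanish, the right one because `sin 0 / 0 = 0`. -/
theorem integral_cexp_I_mul {b : ℝ} (hb : b ≠ 0) (s₁ s₂ : ℝ) :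
    (∫ u in s₁..s₂, Complex.exp (Complex.I * b * u))
      = ((s₂ - s₁ : ℝ) : ℂ) * (Complex.exp (Complex.I * (b * (s₁ + s₂) / 2 : ℝ)) *
          ((Real.sin (b * (s₂ - s₁) / 2) / (b * (s₂ - s₁) / 2) : ℝ) : ℂ)) := by
  have hIb : Complex.I * b ≠ 0 := mul_ne_zero Complex.I_ne_zero (Complex.ofReal_ne_zero.mpr hb)
  rw [integral_exp_mul_complex hIb,
    show Complex.I * b * s₂ = ((b * s₂ : ℝ) : ℂ) * Complex.I by push_cast; ring,
    show Complex.I * b * s₁ = ((b * s₁ : ℝ) : ℂ) * Complex.I by push_cast; ring,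
    cexp_mul_I_sub_cexp_mul_I, show (b * s₂ + b * s₁) / 2 = b * (s₁ + s₂) / 2 by ring,
    show (b * s₂ - b * s₁) / 2 = b * (s₂ - s₁) / 2 by ring]
  rcases eq_or_ne s₂ s₁ with rfl | hs
  · simp
  have hs' : (s₂ : ℂ) - s₁ ≠ 0 := sub_ne_zero.mpr (Complex.ofReal_injective.ne hs)
  have hb' : (b : ℂ) ≠ 0 := Complex.ofReal_ne_zero.mpr hb
  push_cast
  field_simp

theorem spatial_correlation_exact_form_general
    (lam d φ₁ φ₂ θ₁ θ₂ : ℝ) (hlam : 0 < lam) (hd : 0 < d) (hφ : φ₁ < φ₂)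
    (b s₁ s₂ : ℝ) (hb : b = 2 * Real.pi * d / lam)
    (hs₁ : s₁ = Real.sin θ₁) (hs₂ : s₂ = Real.sin θ₂) :
    (1 / (((φ₂ - φ₁) * (s₂ - s₁) : ℝ) : ℂ)) *
        ∫ φ in φ₁..φ₂, ∫ θ in θ₁..θ₂,
          Complex.exp (Complex.I * (b * Real.sin θ : ℝ)) * ((Real.cos θ : ℝ) : ℂ)
      = Complex.exp (Complex.I * (b * (s₁ + s₂) / 2 : ℝ)) *
          ((Real.sin (b * (s₂ - s₁) / 2) / (b * (s₂ - s₁) / 2) : ℝ) : ℂ) := by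
  have hb0 : b ≠ 0 := by rw [hb]; positivity
  rw [integral_cexp_mul_sin_mul_cos, ← hs₁, ← hs₂, integral_const, integral_cexp_I_mul hb0,
    Complex.real_smul]
  rcases eq_or_ne s₂ s₁ with rfl | hs
  · simp
  have hφ' : (φ₂ : ℂ) - φ₁ ≠ 0 := sub_ne_zero.mpr (Complex.ofReal_injective.ne hφ.ne')
  have hs' : (s₂ : ℂ) - s₁ ≠ 0 := sub_ne_zero.mpr (Complex.ofReal_injective.ne hs)
  push_cast
  field_simp

/-- Exact complex-valued form of the normalized spatial correlation in the proof of
Proposition 2: with `b = 2πd/λ`, `s₁ = sin θ₁`, `s₂ = sin θ₂`, the normalized correlation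
integral equals the phase factor `e^{i b (s₁+s₂)/2}` times `sin(b(s₂−s₁)/2)/(b(s₂−s₁)/2)`. -/
theorem spatial_correlation_exact_form
    (lam d φ₁ φ₂ θ₁ θ₂ : ℝ) (hlam : 0 < lam) (hd : 0 < d) (hφ : φ₁ < φ₂)
    (hθ₁ : -(Real.pi / 2) ≤ θ₁) (hθ : θ₁ < θ₂) (hθ₂ : θ₂ ≤ Real.pi / 2)
    (b s₁ s₂ : ℝ) (hb : b = 2 * Real.pi * d / lam)
    (hs₁ : s₁ = Real.sin θ₁) (hs₂ : s₂ = Real.sin θ₂) :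
    (1 / (((φ₂ - φ₁) * (s₂ - s₁) : ℝ) : ℂ)) *
        ∫ φ in φ₁..φ₂, ∫ θ in θ₁..θ₂,
          Complex.exp (Complex.I * (b * Real.sin θ : ℝ)) * ((Real.cos θ : ℝ) : ℂ)
      = Complex.exp (Complex.I * (b * (s₁ + s₂) / 2 : ℝ)) *
          ((Real.sin (b * (s₂ - s₁) / 2) / (b * (s₂ - s₁) / 2) : ℝ) : ℂ) :=
  spatial_correlation_exact_form_general lam d φ₁ φ₂ θ₁ θ₂ hlam hd hφ b s₁ s₂ hb hs₁ hs₂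
end

section
/- Let λ > 0, d > 0, φ₁ < φ₂ be real numbers, and let 0 < θ_c ≤ π. With θ₁ = −π/2 and θ₂ = −π/2 + θ_c, | (1 / ((φ₂ − φ₁)(sin θ₂ − sin θ₁))) · ∫_{φ₁}^{φ₂} ∫_{θ₁}^{θ₂} exp( i (2π/λ) d sin θ ) cos θ dθ dφ | = | sinc( (2d/λ) · sin²(θ_c/2) ) |. -/
open Real Complex intervalIntegral

theorem nsinc_of_ne_zero {x : ℝ} (hx : x ≠ 0) : nsinc x = Real.sin (π * x) / (π * x) :=
  if_neg hx

theorem cexp_I_mul_add_sub_cexp_I_mul_sub (x y : ℂ) :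
    cexp (I * (x + y)) - cexp (I * (x - y)) = 2 * I * Complex.sin y * cexp (I * x) := by
  rw [Complex.sin, mul_add, mul_sub, Complex.exp_add, Complex.exp_sub, neg_mul, Complex.exp_neg,
    mul_comm y I]
  field_simp
  ring_nf
  rw [Complex.I_sq]
  ring

theorem integral_cexp_I_mul_eq_nsinc (a s₁ s₂ : ℝ) :
    ∫ u in s₁..s₂, cexp (I * ↑(a * u)) =
      ↑((s₂ - s₁) * nsinc (a * (s₂ - s₁) / (2 * π))) * cexp (I * ↑(a * ((s₁ + s₂) / 2))) := by
  rcases eq_or_ne a 0 with rfl | ha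
  · simp [nsinc]
  rcases eq_or_ne s₂ s₁ with rfl | hs
  · simp
  have hs' : (s₂ - s₁ : ℂ) ≠ 0 := sub_ne_zero.mpr (ofReal_injective.ne hs)
  have hIa : I * a ≠ 0 := mul_ne_zero I_ne_zero (ofReal_ne_zero.mpr ha)
  have hnsinc : nsinc (a * (s₂ - s₁) / (2 * π))
      = Real.sin (a * ((s₂ - s₁) / 2)) / (a * ((s₂ - s₁) / 2)) := by
    rw [nsinc_of_ne_zero (div_ne_zero (mul_ne_zero ha (sub_ne_zero.mpr hs)) (by positivity))]
    congr 1 <;> field_simp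
  have hdiff : cexp (I * a * s₂) - cexp (I * a * s₁)
      = 2 * I * Complex.sin ↑(a * ((s₂ - s₁) / 2)) * cexp (I * a * ↑((s₁ + s₂) / 2)) := by
    convert cexp_I_mul_add_sub_cexp_I_mul_sub (a * ((s₁ + s₂) / 2) : ℝ) (a * ((s₂ - s₁) / 2) : ℝ)
      using 3 <;> push_cast <;> ring
  simp only [ofReal_mul, ← mul_assoc]
  rw [integral_exp_mul_complex hIa, hdiff, hnsinc]
  push_cast
  field_simp

theorem integral_cexp_I_mul_sin_mul_cos (a θ₁ θ₂ : ℝ) :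
    ∫ θ in θ₁..θ₂, cexp (I * ↑(a * Real.sin θ)) * ↑(Real.cos θ) =
      ∫ u in Real.sin θ₁..Real.sin θ₂, cexp (I * ↑(a * u)) := by
  simp only [mul_comm (cexp _), ← Complex.real_smul]
  exact integral_deriv_smul_comp (g := fun u ↦ cexp (I * ↑(a * u)))
    (fun θ _ ↦ Real.hasDerivAt_sin θ) Real.continuous_cos.continuousOn (by fun_prop)

theorem spatial_correlation_aligned_case_general
    (lam d φ₁ φ₂ θc : ℝ) (hφ : φ₁ < φ₂)
    (hθc : 0 < θc) (hθc' : θc ≤ Real.pi)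
    (θ₁ θ₂ : ℝ) (hθ₁ : θ₁ = -(Real.pi / 2)) (hθ₂ : θ₂ = -(Real.pi / 2) + θc) :
    ‖(1 / (((φ₂ - φ₁) * (Real.sin θ₂ - Real.sin θ₁) : ℝ) : ℂ)) *
        ∫ φ in φ₁..φ₂, ∫ θ in θ₁..θ₂,
          Complex.exp (Complex.I * ((2 * Real.pi / lam) * d * Real.sin θ : ℝ)) *
            ((Real.cos θ : ℝ) : ℂ)‖
      = |nsinc ((2 * d / lam) * Real.sin (θc / 2) ^ 2)| := by
  have hsin : Real.sin θ₂ - Real.sin θ₁ = 2 * Real.sin (θc / 2) ^ 2 := by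
    rw [hθ₁, hθ₂, neg_add_eq_sub, Real.sin_sub_pi_div_two, Real.sin_neg, Real.sin_pi_div_two,
      Real.sin_sq_eq_half_sub]
    ring_nf
  have hsin_pos : 0 < Real.sin (θc / 2) :=
    Real.sin_pos_of_pos_of_lt_pi (by positivity) (by linarith)
  have hφ' : φ₂ - φ₁ ≠ 0 := sub_ne_zero.mpr hφ.ne'
  have harg : 2 * π / lam * d * (2 * Real.sin (θc / 2) ^ 2) / (2 * π)
      = 2 * d / lam * Real.sin (θc / 2) ^ 2 := by
    field_simp
  rw [integral_cexp_I_mul_sin_mul_cos, integral_cexp_I_mul_eq_nsinc, integral_const, hsin, harg]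
  simp only [Complex.real_smul, norm_mul, norm_div, norm_one, Complex.norm_real,
    Complex.norm_exp_I_mul_ofReal, Real.norm_eq_abs, mul_one]
  field_simp

/-- Corollary 1, first case (antenna separation aligned with the surface direction):
with `θ₁ = −π/2` and `θ₂ = −π/2 + θ_c`, the normalized spatial correlation magnitude is
`|sinc((2d/λ) sin²(θ_c/2))|`. -/
theorem spatial_correlation_aligned_case
    (lam d φ₁ φ₂ θc : ℝ) (hlam : 0 < lam) (hd : 0 < d) (hφ : φ₁ < φ₂)
    (hθc : 0 < θc) (hθc' : θc ≤ Real.pi)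
    (θ₁ θ₂ : ℝ) (hθ₁ : θ₁ = -(Real.pi / 2)) (hθ₂ : θ₂ = -(Real.pi / 2) + θc) :
    ‖(1 / (((φ₂ - φ₁) * (Real.sin θ₂ - Real.sin θ₁) : ℝ) : ℂ)) *
        ∫ φ in φ₁..φ₂, ∫ θ in θ₁..θ₂,
          Complex.exp (Complex.I * ((2 * Real.pi / lam) * d * Real.sin θ : ℝ)) *
            ((Real.cos θ : ℝ) : ℂ)‖
      = |nsinc ((2 * d / lam) * Real.sin (θc / 2) ^ 2)| :=
  spatial_correlation_aligned_case_general lam d φ₁ φ₂ θc hφ hθc hθc' θ₁ θ₂ hθ₁ hθ₂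
end

section
/- Let p, q, u be points of Euclidean space ℝ³ with p ≠ q, let o = (p + q)/2 be their midpoint, and suppose the distance δ from u to the closed segment [p, q] is strictly positive. Then | ( ‖u − q‖ − ‖u − p‖ ) − ⟨ q − p , (o − u)/‖o − u‖ ⟩ | ≤ ‖q − p‖² / (2δ), where ⟨·,·⟩ is the Euclidean inner product. -/
open Metric

/-!
With `x = p - u` and `y = q - u`, the unit vector is `(x + y) / ‖x + y‖` and
`⟪y - x, x + y⟫ = ‖y‖² - ‖x‖²`, so the error factors as
`(‖y‖ - ‖x‖) (‖x + y‖ - ‖x‖ - ‖y‖) / ‖x + y‖`. Cauchy–Schwarz bounds the first factor by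
`‖y - x‖ ‖x + y‖ / (‖x‖ + ‖y‖)`, the triangle inequality bounds `‖x‖ + ‖y‖ - ‖x + y‖` by
`‖y - x‖`, and `‖x‖, ‖y‖ ≥ δ` since `p` and `q` lie on the segment.
-/

section

variable {E : Type*}

theorem norm_add_norm_le_norm_add_add_norm_sub [SeminormedAddCommGroup E] [NormedSpace ℝ E]
    (x y : E) : ‖x‖ + ‖y‖ ≤ ‖x + y‖ + ‖y - x‖ := by
  have hx : ‖(2 : ℝ) • x‖ ≤ ‖x + y‖ + ‖y - x‖ := by
    calc ‖(2 : ℝ) • x‖ = ‖(x + y) - (y - x)‖ := by congr 1; module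
      _ ≤ ‖x + y‖ + ‖y - x‖ := norm_sub_le _ _
  have hy : ‖(2 : ℝ) • y‖ ≤ ‖x + y‖ + ‖y - x‖ := by
    calc ‖(2 : ℝ) • y‖ = ‖(x + y) + (y - x)‖ := by congr 1; module
      _ ≤ ‖x + y‖ + ‖y - x‖ := norm_add_le _ _
  rw [norm_smul, Real.norm_two] at hx hy
  linarith

variable [NormedAddCommGroup E] [InnerProductSpace ℝ E]

theorem real_inner_sub_add_eq_norm_sq_sub_norm_sq (x y : E) :
    inner ℝ (y - x) (x + y) = ‖y‖ ^ 2 - ‖x‖ ^ 2 := by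
  rw [inner_sub_left, inner_add_right, inner_add_right, real_inner_self_eq_norm_sq,
    real_inner_self_eq_norm_sq, real_inner_comm x y]
  ring

theorem abs_norm_sub_norm_sub_inner_le (x y : E) :
    |‖y‖ - ‖x‖ - inner ℝ (y - x) (‖x + y‖⁻¹ • (x + y))| ≤ ‖y - x‖ ^ 2 / (‖x‖ + ‖y‖) := by
  rcases eq_or_ne (x + y) 0 with hsum | hsum
  · rw [eq_neg_of_add_eq_zero_right hsum]
    simp only [norm_neg, sub_self, add_neg_cancel, smul_zero, inner_zero_right, abs_zero]
    positivity
  set n := ‖x + y‖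
  set D := ‖y - x‖
  have hn : 0 < n := norm_pos_iff.mpr hsum
  have hn_le : n ≤ ‖x‖ + ‖y‖ := norm_add_le x y
  have hpos : 0 < ‖x‖ + ‖y‖ := hn.trans_le hn_le
  have hCS : |‖y‖ ^ 2 - ‖x‖ ^ 2| ≤ D * n := by
    rw [← real_inner_sub_add_eq_norm_sq_sub_norm_sq]
    exact abs_real_inner_le_norm _ _
  have hgap : |(n - (‖x‖ + ‖y‖)) / n| ≤ D / n := by
    rw [abs_div, abs_of_pos hn, abs_of_nonpos (by linarith)]
    gcongr
    linarith [norm_add_norm_le_norm_add_add_norm_sub x y]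
  have hfactor : ‖y‖ - ‖x‖ - inner ℝ (y - x) (n⁻¹ • (x + y))
      = (‖y‖ ^ 2 - ‖x‖ ^ 2) / (‖x‖ + ‖y‖) * ((n - (‖x‖ + ‖y‖)) / n) := by
    rw [real_inner_smul_right, real_inner_sub_add_eq_norm_sq_sub_norm_sq]
    field_simp
    ring
  rw [hfactor, abs_mul, abs_div, abs_of_pos hpos]
  calc |‖y‖ ^ 2 - ‖x‖ ^ 2| / (‖x‖ + ‖y‖) * |(n - (‖x‖ + ‖y‖)) / n|
      ≤ D * n / (‖x‖ + ‖y‖) * (D / n) := by gcongr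
    _ = D ^ 2 / (‖x‖ + ‖y‖) := by field_simp

end

theorem dist_difference_first_order_expansion_general
    (p q u : EuclideanSpace ℝ (Fin 3))
    (o : EuclideanSpace ℝ (Fin 3)) (ho : o = midpoint ℝ p q)
    (δ : ℝ) (hδ : δ = Metric.infDist u (segment ℝ p q)) (hδpos : 0 < δ) :
    |(‖u - q‖ - ‖u - p‖) - (inner ℝ (q - p) ((‖o - u‖)⁻¹ • (o - u)) : ℝ)|
      ≤ ‖q - p‖ ^ 2 / (2 * δ) := by
  have hδp : δ ≤ ‖p - u‖ := by
    rw [hδ, ← dist_eq_norm, dist_comm]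
    exact infDist_le_dist_of_mem (left_mem_segment ℝ p q)
  have hδq : δ ≤ ‖q - u‖ := by
    rw [hδ, ← dist_eq_norm, dist_comm]
    exact infDist_le_dist_of_mem (right_mem_segment ℝ p q)
  have hsum : (p - u) + (q - u) = (2 : ℝ) • (o - u) := by
    rw [ho, midpoint_eq_smul_add, invOf_eq_inv]
    module
  have hdir : ‖o - u‖⁻¹ • (o - u) = ‖(p - u) + (q - u)‖⁻¹ • ((p - u) + (q - u)) := by
    rw [hsum, norm_smul, Real.norm_two, smul_smul]
    congr 1
    ring
  have hbound := abs_norm_sub_norm_sub_inner_le (p - u) (q - u)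
  rw [sub_sub_sub_cancel_right, ← hdir, norm_sub_rev p, norm_sub_rev q] at hbound
  calc _ ≤ ‖q - p‖ ^ 2 / (‖u - p‖ + ‖u - q‖) := hbound
    _ ≤ ‖q - p‖ ^ 2 / (2 * δ) := by
      rw [norm_sub_rev u p, norm_sub_rev u q]
      gcongr
      linarith

/-- First-order geometric expansion (eq. (29) of the paper): the difference of distances
from `u` to `q` and to `p` equals the inner product of `q − p` with the unit vector from `u`
toward the midpoint `o = (p+q)/2`, up to an error bounded by `‖q − p‖² / (2δ)`, where `δ > 0`
is the distance from `u` to the segment `[p, q]`. -/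
theorem dist_difference_first_order_expansion
    (p q u : EuclideanSpace ℝ (Fin 3)) (hpq : p ≠ q)
    (o : EuclideanSpace ℝ (Fin 3)) (ho : o = midpoint ℝ p q)
    (δ : ℝ) (hδ : δ = Metric.infDist u (segment ℝ p q)) (hδpos : 0 < δ) :
    |(‖u - q‖ - ‖u - p‖) - (inner ℝ (q - p) ((‖o - u‖)⁻¹ • (o - u)) : ℝ)|
      ≤ ‖q - p‖ ^ 2 / (2 * δ) :=
  dist_difference_first_order_expansion_general p q u o ho δ hδ hδpos
end
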